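/- If G is a graph of order n ≥ 3 with minimum degree δ(G) = 1 and exactly one full vertex (a vertex of degree n−1), then C(G) = n if and only if G is obtained from K_1 ∪ K_{n−1} by adding an edge joining the isolated vertex to one vertex of the complete graph K_{n−1}. -/

import Mathlib

open SimpleGraph

attribute [local instance] Classical.propDecidable

def Dominates {V : Type*} (G : SimpleGraph V) (S : Set V) : Prop :=
  ∀ v, v ∉ S → ∃ u ∈ S, G.Adj u v

def Coalition {V : Type*} (G : SimpleGraph V) (A B : Set V) : Prop :=
  Disjoint A B ∧ ¬ Dominates G A ∧ ¬ Dominates G B ∧ Dominates G (A ∪ B)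

def IsCoalitionPartition {V : Type*} (G : SimpleGraph V) (P : Finset (Set V)) : Prop :=
  (∀ A ∈ P, A.Nonempty) ∧
  (∀ A ∈ P, ∀ B ∈ P, A ≠ B → Disjoint A B) ∧
  (∀ v : V, ∃ A ∈ P, v ∈ A) ∧
  (∀ A ∈ P, (Dominates G A ∧ ∃ v, A = {v}) ∨
    (¬ Dominates G A ∧ ∃ B ∈ P, B ≠ A ∧ Coalition G A B))

noncomputable def coalitionNumber {V : Type*} (G : SimpleGraph V) : ℕ :=
  sSup {n | ∃ P : Finset (Set V), IsCoalitionPartition G P ∧ P.card = n}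

def coalitionGraph {V : Type*} (G : SimpleGraph V) (P : Finset (Set V)) :
    SimpleGraph {A : Set V // A ∈ P} where
  Adj A B := Coalition G A.1 B.1
  symm := by
    refine ⟨?_⟩
    rintro A B ⟨d, na, nb, u⟩
    exact ⟨d.symm, nb, na, by rwa [Set.union_comm]⟩
  loopless := by
    refine ⟨?_⟩
    rintro ⟨A, hA⟩ ⟨d, na, nb, u⟩
    rw [Set.union_self] at u
    exact na u

/-- The graph obtained from `K_1 ∪ K_{n-1}` by adding an edge joining the isolated
vertex `0` to the vertex `1` of the complete graph on the remaining vertices. -/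
def K1UnionCompletePlusEdge (n : ℕ) : SimpleGraph (Fin n) where
  Adj a b := a ≠ b ∧ ((a.val ≠ 0 ∧ b.val ≠ 0) ∨ (a.val = 0 ∧ b.val = 1) ∨
    (a.val = 1 ∧ b.val = 0))
  symm := by refine ⟨?_⟩; rintro a b ⟨h1, h2⟩; exact ⟨h1.symm, by tauto⟩
  loopless := by refine ⟨?_⟩; rintro a ⟨h, -⟩; exact h rfl

/-! The singleton partition is the only partition of `V` into `|V|` nonempty parts, so
`C(G) = |V|` exactly when every non-universal vertex `v` has a non-universal partner `w` with
`{v, w}` dominating. A leaf `u` of `G` hangs off the universal vertex `f`, so `u` can only be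
dominated by `{v, w}` if `w = u`; then `v` must be adjacent to every vertex except `u`, which makes
`G` the clique on `V \ {u}` with the pendant edge `uf`. Conversely, in that graph `u` pairs with
any third vertex and every other non-universal vertex pairs with `u`. -/

lemma Equiv.exists_apply_eq_apply_eq {V W : Type*} (e : V ≃ W) {u f : V} (huf : u ≠ f) {u' f' : W}
    (huf' : u' ≠ f') : ∃ e' : V ≃ W, e' u = u' ∧ e' f = f' := by
  set e₁ := e.trans (Equiv.swap (e u) u')
  have he₁u : e₁ u = u' := by simp [e₁]
  have he₁f : e₁ f ≠ u' := he₁u ▸ e₁.injective.ne huf.symm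
  refine ⟨e₁.trans (Equiv.swap (e₁ f) f'), ?_, by simp⟩
  simp only [Equiv.trans_apply, he₁u]
  exact Equiv.swap_apply_of_ne_of_ne he₁f.symm huf'

namespace SimpleGraph

variable {V W : Type*}

def pendantClique (u f : V) : SimpleGraph V where
  Adj a b := a ≠ b ∧ (a ≠ u ∧ b ≠ u ∨ a = u ∧ b = f ∨ a = f ∧ b = u)
  symm := ⟨fun a b ⟨hab, h⟩ => ⟨hab.symm, by tauto⟩⟩
  loopless := ⟨fun a h => h.1 rfl⟩

@[simp]
lemma pendantClique_adj {u f a b : V} :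
    (pendantClique u f).Adj a b ↔ a ≠ b ∧ (a ≠ u ∧ b ≠ u ∨ a = u ∧ b = f ∨ a = f ∧ b = u) :=
  Iff.rfl

lemma K1UnionCompletePlusEdge_eq_pendantClique {n : ℕ} (hn : 2 ≤ n) :
    K1UnionCompletePlusEdge n = pendantClique ⟨0, by omega⟩ ⟨1, hn⟩ := by
  ext a b
  simp only [K1UnionCompletePlusEdge, pendantClique_adj, ne_eq, Fin.ext_iff]

def Iso.pendantClique (e : V ≃ W) (u f : V) :
    SimpleGraph.pendantClique u f ≃g SimpleGraph.pendantClique (e u) (e f) where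
  toEquiv := e
  map_rel_iff' := by simp [e.injective.eq_iff]

lemma nonempty_iso_pendantClique_iff (e : V ≃ W) {G : SimpleGraph V} {u' f' : W}
    (huf' : u' ≠ f') :
    Nonempty (G ≃g pendantClique u' f') ↔ ∃ u f, u ≠ f ∧ G = pendantClique u f := by
  constructor
  · rintro ⟨φ⟩
    refine ⟨φ.symm u', φ.symm f', φ.symm.injective.ne huf', ?_⟩
    ext a b
    rw [← φ.map_adj_iff]
    simp only [pendantClique_adj, ne_eq, EmbeddingLike.apply_eq_iff_eq, ← RelIso.eq_symm_apply]
  · rintro ⟨u, f, huf, rfl⟩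
    obtain ⟨e', rfl, rfl⟩ := Equiv.exists_apply_eq_apply_eq e huf huf'
    exact ⟨Iso.pendantClique e' u f⟩

variable {G : SimpleGraph V}

lemma adj_iff_eq_of_degree_eq_one [Fintype V] {u f : V} (hu : G.degree u = 1) (huf : G.Adj u f)
    (x : V) : G.Adj u x ↔ x = f := by
  obtain ⟨w, -, hw⟩ := degree_eq_one_iff_existsUnique_adj.mp hu
  exact ⟨fun hx => (hw x hx).trans (hw f huf).symm, fun hx => hx ▸ huf⟩

lemma dominates_singleton_iff {v : V} : Dominates G {v} ↔ G.IsUniversal v := by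
  simp [Dominates, IsUniversal, eq_comm]

lemma dominates_pair_iff {v w : V} :
    Dominates G ({v} ∪ {w}) ↔ ∀ x, x ≠ v → x ≠ w → G.Adj v x ∨ G.Adj w x := by
  simp only [Dominates, Set.mem_union, Set.mem_singleton_iff, not_or, exists_eq_or_imp,
    exists_eq_left, and_imp]

lemma coalition_singleton_iff {v w : V} :
    Coalition G {v} {w} ↔ v ≠ w ∧ ¬ G.IsUniversal v ∧ ¬ G.IsUniversal w ∧
      ∀ x, x ≠ v → x ≠ w → G.Adj v x ∨ G.Adj w x := by
  simp only [Coalition, Set.disjoint_singleton, dominates_singleton_iff, dominates_pair_iff]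

end SimpleGraph

namespace IsCoalitionPartition

variable {V : Type*} {G : SimpleGraph V} {P : Finset (Set V)}

lemma eq_of_mem_of_mem (hP : IsCoalitionPartition G P) {A B : Set V} (hA : A ∈ P) (hB : B ∈ P)
    {v : V} (hvA : v ∈ A) (hvB : v ∈ B) : A = B :=
  by_contra fun h => Set.disjoint_left.mp (hP.2.1 A hA B hB h) hvA hvB

lemma exists_surjective_mem (hP : IsCoalitionPartition G P) :
    ∃ p : V → P, Function.Surjective p ∧ ∀ v, v ∈ (p v : Set V) := by
  choose p hpP hp using hP.2.2.1
  refine ⟨fun v => ⟨p v, hpP v⟩, fun A => ?_, hp⟩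
  obtain ⟨a, ha⟩ := hP.1 A A.2
  exact ⟨a, Subtype.ext (hP.eq_of_mem_of_mem (hpP a) A.2 (hp a) ha)⟩

variable [Fintype V]

lemma card_le (hP : IsCoalitionPartition G P) : P.card ≤ Fintype.card V := by
  obtain ⟨p, hp, -⟩ := hP.exists_surjective_mem
  simpa using Fintype.card_le_of_surjective p hp

lemma eq_image_singleton_of_card_eq (hP : IsCoalitionPartition G P)
    (hcard : P.card = Fintype.card V) : P = Finset.univ.image singleton := by
  obtain ⟨p, hsurj, hp⟩ := hP.exists_surjective_mem
  have hinj : p.Injective :=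
    ((Fintype.bijective_iff_surjective_and_card p).mpr ⟨hsurj, by simp [hcard]⟩).1
  have hsingleton (v : V) : (p v : Set V) = {v} :=
    Set.eq_singleton_iff_unique_mem.mpr ⟨hp v, fun x hx =>
      hinj (Subtype.ext (hP.eq_of_mem_of_mem (p x).2 (p v).2 (hp x) hx))⟩
  ext A
  simp only [Finset.mem_image, Finset.mem_univ, true_and]
  constructor
  · intro hA
    obtain ⟨v, hv⟩ := hsurj ⟨A, hA⟩
    exact ⟨v, by rw [← hsingleton, hv]⟩
  · rintro ⟨v, rfl⟩
    exact hsingleton v ▸ (p v).2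

end IsCoalitionPartition

section CoalitionNumber

variable {V : Type*} [Fintype V] {G : SimpleGraph V}

lemma isCoalitionPartition_image_singleton_iff :
    IsCoalitionPartition G (Finset.univ.image singleton) ↔
      ∀ v, G.IsUniversal v ∨ ∃ w, w ≠ v ∧ Coalition G {v} {w} := by
  simp only [IsCoalitionPartition, Finset.forall_mem_image, Finset.exists_mem_image,
    Finset.mem_univ, forall_const, Set.singleton_nonempty, ne_eq, Set.singleton_eq_singleton_iff,
    SimpleGraph.dominates_singleton_iff, true_and, implies_true, Set.disjoint_singleton,
    Set.mem_singleton_iff, exists_eq', and_true, imp_self]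
  refine forall_congr' fun v => ⟨?_, ?_⟩
  · rintro (hv | ⟨-, hw⟩)
    exacts [Or.inl hv, Or.inr hw]
  · rintro (hv | ⟨w, hwv, hvw⟩)
    exacts [Or.inl hv, Or.inr ⟨(SimpleGraph.coalition_singleton_iff.mp hvw).2.1, w, hwv, hvw⟩]

lemma coalitionNumber_le_card : coalitionNumber G ≤ Fintype.card V :=
  csSup_le' (by rintro _ ⟨P, hP, rfl⟩; exact hP.card_le)

lemma coalitionNumber_eq_card_iff [Nonempty V] :
    coalitionNumber G = Fintype.card V ↔ IsCoalitionPartition G (Finset.univ.image singleton) := by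
  set S := {n | ∃ P, IsCoalitionPartition G P ∧ P.card = n}
  have hbdd : BddAbove S := ⟨Fintype.card V, by rintro _ ⟨P, hP, rfl⟩; exact hP.card_le⟩
  constructor
  · intro h
    have hS : S.Nonempty := by
      by_contra hS
      rw [Set.not_nonempty_iff_eq_empty] at hS
      simp only [coalitionNumber, S, hS, csSup_empty, bot_eq_zero'] at h
      exact Fintype.card_ne_zero h.symm
    obtain ⟨P, hP, hcard⟩ := Nat.sSup_mem hS hbdd
    rwa [← hP.eq_image_singleton_of_card_eq (hcard.trans h)]
  · intro hP
    refine le_antisymm coalitionNumber_le_card (le_csSup hbdd ⟨_, hP, ?_⟩)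
    simp [Finset.card_image_of_injective _ Set.singleton_injective]

end CoalitionNumber

namespace SimpleGraph

variable {V : Type*} {G : SimpleGraph V}

lemma isUniversal_pendantClique_iff [Fintype V] (hn : 3 ≤ Fintype.card V) {u f v : V}
    (huf : u ≠ f) : (pendantClique u f).IsUniversal v ↔ v = f := by
  refine ⟨fun hv => ?_, ?_⟩
  · by_contra hvf
    obtain ⟨w, hwu, hwf⟩ :=
      ENat.exists_ne_ne_of_three_le (by simpa [ENat.card_eq_coe_fintype_card] using hn) u f
    by_cases hvu : v = u
    · subst hvu
      have := hv (Ne.symm hwu)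
      simp_all
    · have := hv hvu
      simp_all
  · rintro rfl w hw
    simp only [pendantClique_adj]
    tauto

lemma forall_isUniversal_or_coalition_pendantClique [Fintype V] (hn : 3 ≤ Fintype.card V)
    {u f : V} (huf : u ≠ f) (v : V) :
    (pendantClique u f).IsUniversal v ∨ ∃ w, w ≠ v ∧ Coalition (pendantClique u f) {v} {w} := by
  have huniv (v : V) := isUniversal_pendantClique_iff hn (v := v) huf
  have hpair (v : V) (hvu : v ≠ u) (x : V) (hxv : x ≠ v) (hxu : x ≠ u) :
      (pendantClique u f).Adj v x ∨ (pendantClique u f).Adj u x := by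
    simp only [pendantClique_adj]
    tauto
  by_cases hvf : v = f
  · exact Or.inl ((huniv v).mpr hvf)
  right
  by_cases hvu : v = u
  · subst hvu
    obtain ⟨w, hwv, hwf⟩ :=
      ENat.exists_ne_ne_of_three_le (by simpa [ENat.card_eq_coe_fintype_card] using hn) v f
    refine ⟨w, hwv, coalition_singleton_iff.mpr ⟨hwv.symm, ?_, ?_, fun x hxv hxw => ?_⟩⟩
    · rwa [huniv]
    · rwa [huniv]
    · exact (hpair w hwv x hxw hxv).symm
  · refine ⟨u, Ne.symm hvu, coalition_singleton_iff.mpr ⟨hvu, ?_, ?_, hpair v hvu⟩⟩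
    · rwa [huniv]
    · rwa [huniv]

theorem eq_pendantClique_of_forall_coalition {u f : V} (hu : ∀ x, G.Adj u x ↔ x = f)
    (hf : ∀ v, G.IsUniversal v ↔ v = f)
    (h : ∀ v, G.IsUniversal v ∨ ∃ w, w ≠ v ∧ Coalition G {v} {w}) :
    G = pendantClique u f := by
  have hclique (v : V) (hvu : v ≠ u) (y : V) (hyv : y ≠ v) (hyu : y ≠ u) : G.Adj v y := by
    by_cases hvf : v = f
    · exact (hf v).mpr hvf (Ne.symm hyv)
    obtain ⟨w, hwv, hvw⟩ := (h v).resolve_left (hvf ∘ (hf v).mp)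
    obtain ⟨-, -, hw, hpair⟩ := coalition_singleton_iff.mp hvw
    -- `u`, whose only neighbour is the universal vertex `f`, must be dominated by `{v, w}`
    have hwu : w = u := by
      by_contra hwu
      rcases hpair u (Ne.symm hvu) (Ne.symm hwu) with hvu' | hwu'
      · exact hvf ((hu v).mp hvu'.symm)
      · exact hw ((hf w).mpr ((hu w).mp hwu'.symm))
    subst hwu
    rcases hpair y hyv hyu with hvy | hwy
    · exact hvy
    · obtain rfl := (hu y).mp hwy
      exact ((hf y).mpr rfl (Ne.symm hvf)).symm
  ext a b
  simp only [pendantClique_adj]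
  constructor
  · intro hab
    refine ⟨G.ne_of_adj hab, ?_⟩
    by_cases hau : a = u
    · exact Or.inr (Or.inl ⟨hau, (hu b).mp (hau ▸ hab)⟩)
    by_cases hbu : b = u
    · exact Or.inr (Or.inr ⟨(hu a).mp (hbu ▸ hab.symm), hbu⟩)
    exact Or.inl ⟨hau, hbu⟩
  · rintro ⟨hab, ⟨hau, hbu⟩ | ⟨rfl, rfl⟩ | ⟨rfl, rfl⟩⟩
    · exact hclique a hau b (Ne.symm hab) hbu
    · exact (hu _).mpr rfl
    · exact ((hu _).mpr rfl).symm

end SimpleGraph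

theorem stmt6 {V : Type*} [Fintype V] (G : SimpleGraph V)
    (hn : 3 ≤ Fintype.card V) (hδ : G.minDegree = 1)
    (hfull : ∃! v : V, G.degree v = Fintype.card V - 1) :
    coalitionNumber G = Fintype.card V ↔
      Nonempty (G ≃g K1UnionCompletePlusEdge (Fintype.card V)) := by
  have : Nonempty V := Fintype.card_pos_iff.mp (by omega)
  rw [K1UnionCompletePlusEdge_eq_pendantClique (by omega),
    nonempty_iso_pendantClique_iff (Fintype.equivFin V) (by simp [Fin.ext_iff]),
    coalitionNumber_eq_card_iff, isCoalitionPartition_image_singleton_iff]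
  constructor
  · intro h
    obtain ⟨f, hf, hf_unique⟩ := hfull
    have hf_univ (v : V) : G.IsUniversal v ↔ v = f := by
      rw [← degree_eq_card_sub_one]
      exact ⟨hf_unique v, by rintro rfl; exact hf⟩
    obtain ⟨u, hu⟩ := G.exists_minimal_degree_vertex
    have huf : u ≠ f := by
      rintro rfl
      omega
    have hu_adj := adj_iff_eq_of_degree_eq_one (hu ▸ hδ) ((hf_univ f).mpr rfl huf.symm).symm
    exact ⟨u, f, huf, eq_pendantClique_of_forall_coalition hu_adj hf_univ h⟩
  · rintro ⟨u, f, huf, rfl⟩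
    exact forall_isUniversal_or_coalition_pendantClique hn huf
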